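/- arXiv:1512.08751 — 2 statements merged into one kernel-verified Lean document; each statement's English description precedes it below -/
import Mathlib

section
/- For real numbers β and γ, the double integral of e^{2i(βr + γz)} over the triangle {-1/2 ≤ r ≤ z ≤ 1/2} equals (1/2) sinc(β) sinc(γ) + i (β-γ)(sinc(β+γ) - sinc(β-γ))/(4βγ), where the formula at β = 0 or γ = 0 is interpreted by continuous extension; in particular the value at β = γ = 0 is 1/2. -/
noncomputable def sinc (z : ℝ) : ℝ := if z = 0 then 1 else Real.sin z / z

/-!
For every real `a`, `∫_{-1/2}^{1/2} e^{2iar} dr = sinc a`. Integrating the inner exponential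
first therefore gives, for `γ ≠ 0`, the value `(e^{iγ} sinc β - sinc (β + γ)) / (2iγ)`, and the
stated formula follows from `x sinc x = sin x` and `sin (β + γ) + sin (β - γ) = 2 sin β cos γ`.
The continuous extension is the integral itself, a parametric integral of a continuous
integrand; at `β = γ = 0` it is the area of the triangle.
-/

open Complex intervalIntegral

theorem sinc_eq_real_sinc : sinc = Real.sinc := rfl

theorem Real.mul_sinc (x : ℝ) : x * Real.sinc x = Real.sin x := by
  rcases eq_or_ne x 0 with rfl | hx
  · simp
  · rw [Real.sinc_of_ne_zero hx]
    field_simp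

theorem integral_exp_two_mul_I_eq_sinc (a : ℝ) :
    ∫ r in -(1/2 : ℝ)..1/2, cexp (2 * I * (a * r)) = Real.sinc a := by
  rcases eq_or_ne a 0 with rfl | ha
  · norm_num
  have h2a : 2 * I * a ≠ 0 := by simp [ha, I_ne_zero]
  simp_rw [← mul_assoc, integral_exp_mul_complex h2a, Real.sinc_of_ne_zero ha]
  rw [show 2 * I * a * (1/2 : ℝ) = a * I by push_cast; ring,
    show 2 * I * a * (-(1/2) : ℝ) = -a * I by push_cast; ring, exp_mul_I, exp_mul_I,
    Complex.cos_neg, Complex.sin_neg]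
  push_cast
  field_simp
  ring

noncomputable def triangleExpIntegral (β γ : ℝ) : ℂ :=
  ∫ r in -(1/2 : ℝ)..1/2, cexp (2 * I * (β * r)) * ∫ z in r..1/2, cexp (2 * I * (γ * z))

theorem continuous_triangleExpIntegral :
    Continuous fun p : ℝ × ℝ => triangleExpIntegral p.1 p.2 := by
  have inner : Continuous fun q : (ℝ × ℝ) × ℝ => ∫ z in q.2..1/2, cexp (2 * I * (q.1.2 * z)) := by
    simp_rw [integral_symm (1/2 : ℝ)]
    exact (continuous_parametric_intervalIntegral_of_continuous (by fun_prop) continuous_snd).neg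
  exact continuous_parametric_intervalIntegral_of_continuous' (by fun_prop) _ _

theorem triangleExpIntegral_zero_zero : triangleExpIntegral 0 0 = 1 / 2 := by
  have inner (r : ℝ) : cexp (2 * I * ((0 : ℝ) * r)) * ∫ z in r..1/2, cexp (2 * I * ((0 : ℝ) * z)) =
      ((1/2 - r : ℝ) : ℂ) := by
    simp
  simp_rw [triangleExpIntegral, inner, integral_ofReal]
  rw [integral_sub intervalIntegrable_const intervalIntegrable_id, integral_const, integral_id]
  norm_num

theorem triangleExpIntegral_of_ne_zero (β : ℝ) {γ : ℝ} (hγ : γ ≠ 0) :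
    triangleExpIntegral β γ = (cexp (γ * I) * Real.sinc β - Real.sinc (β + γ)) / (2 * I * γ) := by
  have h2γ : 2 * I * γ ≠ 0 := by simp [hγ, I_ne_zero]
  have inner (r : ℝ) : cexp (2 * I * (β * r)) * ∫ z in r..1/2, cexp (2 * I * (γ * z)) =
      (cexp (γ * I) * cexp (2 * I * (β * r)) - cexp (2 * I * ((β + γ : ℝ) * r))) / (2 * I * γ) := by
    simp_rw [← mul_assoc, integral_exp_mul_complex h2γ]
    rw [mul_div_assoc', mul_sub]
    simp only [← Complex.exp_add]
    congr 3 <;> push_cast <;> ring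
  have hint (c : ℝ) : IntervalIntegrable (fun r : ℝ => cexp (2 * I * (c * r)))
      MeasureTheory.volume (-(1/2)) (1/2) :=
    (by fun_prop : Continuous fun r : ℝ => cexp (2 * I * (c * r))).intervalIntegrable _ _
  simp_rw [triangleExpIntegral, inner]
  rw [integral_div, integral_sub ((hint β).const_mul _) (hint _), integral_const_mul,
    integral_exp_two_mul_I_eq_sinc, integral_exp_two_mul_I_eq_sinc]

theorem triangleExpIntegral_eq_sinc_formula {β γ : ℝ} (hβ : β ≠ 0) (hγ : γ ≠ 0) :
    triangleExpIntegral β γ = (1/2 : ℂ) * (sinc β : ℂ) * (sinc γ : ℂ) +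
      I * ((β - γ : ℝ) : ℂ) * ((sinc (β + γ) : ℂ) - (sinc (β - γ) : ℂ)) /
        (4 * (β : ℂ) * (γ : ℂ)) := by
  have key : (β + γ) * Real.sinc (β + γ) + (β - γ) * Real.sinc (β - γ)
      = 2 * Real.cos γ * (β * Real.sinc β) := by
    simp only [Real.mul_sinc, Real.sin_add, Real.sin_sub]
    ring
  have keyC := congrArg ofReal key
  have hβ' : (β : ℂ) ≠ 0 := ofReal_ne_zero.2 hβ
  have hγ' : (γ : ℂ) ≠ 0 := ofReal_ne_zero.2 hγ
  rw [triangleExpIntegral_of_ne_zero β hγ, sinc_eq_real_sinc, exp_mul_I, ← ofReal_cos,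
    ← ofReal_sin, ← Real.mul_sinc γ]
  push_cast at keyC ⊢
  field_simp
  linear_combination (-2) * keyC +
    2 * ((γ - β) * Real.sinc (β + γ) - (γ - β) * Real.sinc (β - γ)) * I_sq

/-- The double integral of `e^{2i(βr+γz)}` over the triangle `{-1/2 ≤ r ≤ z ≤ 1/2}`
equals the continuous extension of
`(1/2)·sinc β·sinc γ + i·(β-γ)(sinc(β+γ)-sinc(β-γ))/(4βγ)`, whose value at `β = γ = 0`
is `1/2`. -/
theorem triangle_integral_sinc :
    ∃ F : ℝ → ℝ → ℂ,
      Continuous (fun p : ℝ × ℝ => F p.1 p.2) ∧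
      (∀ β γ : ℝ, β ≠ 0 → γ ≠ 0 →
        F β γ = (1/2 : ℂ) * (sinc β : ℂ) * (sinc γ : ℂ) +
          Complex.I * ((β - γ : ℝ) : ℂ) * ((sinc (β + γ) : ℂ) - (sinc (β - γ) : ℂ)) /
            (4 * (β : ℂ) * (γ : ℂ))) ∧
      (∀ β γ : ℝ,
        (∫ r in (-(1/2) : ℝ)..(1/2 : ℝ),
            Complex.exp (2 * Complex.I * (β * r)) *
              ∫ z in r..(1/2 : ℝ), Complex.exp (2 * Complex.I * (γ * z))) = F β γ) ∧
      F 0 0 = 1/2 :=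
  ⟨triangleExpIntegral, continuous_triangleExpIntegral,
    fun _ _ hβ hγ => triangleExpIntegral_eq_sinc_formula hβ hγ, fun _ _ => rfl,
    triangleExpIntegral_zero_zero⟩
end

section
/- Let Π(x,v) = Im(H̃_0(v) e^{i v^T Z x}) with H̃_0 Hermitian and absolutely integrable, Z ∈ ℝ^{d×n}, Θ ∈ ℝ^{n×n} antisymmetric, and let μ̃: ℝ^n → ℝ be integrable. Then ∫_{ℝ^n} ∫_{ℝ^d} Π(x,v) μ̃(x − Θ Z^T v) dv dx = 0. -/
/-!
Since `|Π(x, v)| ≤ |H̃₀(v)|` and the shear `(x, v) ↦ (x - ΘZᵀv, v)` preserves Lebesgue measure, the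
integrand is integrable on the product and Fubini applies. For fixed `v`, the substitution
`x ↦ x + ΘZᵀv` removes the shift from `μ̃`: `Π(x + ΘZᵀv, v) = Π(x, v)` because
`(Zᵀv)ᵀΘ(Zᵀv) = 0` for antisymmetric `Θ`. What remains, `v ↦ ∫ Π(x, v) μ̃(x) dx`, is odd in `v`
since `H̃₀` is Hermitian, so its integral vanishes.
-/

open Matrix MeasureTheory Function

theorem integral_eq_zero_of_odd {V E : Type*} [AddGroup V] [MeasurableSpace V] [MeasurableNeg V]
    [NormedAddCommGroup E] [NormedSpace ℝ E] (ν : Measure V) [ν.IsNegInvariant] {g : V → E}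
    (hg : ∀ v, g (-v) = -g v) :
    ∫ v, g v ∂ν = 0 := by
  have : IsAddTorsionFree E := .of_isTorsionFree ℝ E
  simp_rw [← self_eq_neg, ← integral_neg, ← hg, integral_neg_eq_self]

theorem integral_mul_comp_sub_eq_of_add_eq {G : Type*} [AddGroup G] [MeasurableSpace G]
    [MeasurableAdd G] {μ : Measure G} [μ.IsAddRightInvariant] {k f : G → ℝ} {a : G}
    (hk : ∀ x, k (x + a) = k x) :
    ∫ x, k x * f (x - a) ∂μ = ∫ x, k x * f x ∂μ := by
  rw [← integral_add_right_eq_self (fun x => k x * f (x - a)) a]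
  simp_rw [hk, add_sub_cancel_right]

section Shear

variable {G V : Type*} [AddGroup G] [MeasurableSpace G] [MeasurableAdd₂ G] [MeasurableNeg G]
  {μ : Measure G} [SFinite μ] [μ.IsAddRightInvariant]
  [MeasurableSpace V] {ν : Measure V} [SFinite ν] {c : V → G}

theorem measurePreserving_sub_comp_prod (hc : Measurable c) :
    MeasurePreserving (fun p : G × V => (p.1 - c p.2, p.2)) (μ.prod ν) (μ.prod ν) := by
  have hskew : MeasurePreserving (fun p : V × G => (p.1, p.2 - c p.1)) (ν.prod μ) (ν.prod μ) :=
    (MeasurePreserving.id ν).skew_product (measurable_snd.sub (hc.comp measurable_fst))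
      (ae_of_all _ fun v => map_sub_right_eq_self μ (c v))
  exact (Measure.measurePreserving_swap.comp hskew).comp Measure.measurePreserving_swap

theorem integrable_mul_comp_sub_prod {K : G → V → ℝ} {f : G → ℝ} {h : V → ℝ}
    (hc : Measurable c) (hK : AEStronglyMeasurable (uncurry K) (μ.prod ν))
    (hKh : ∀ x v, |K x v| ≤ h v) (hh : Integrable h ν) (hf : Integrable f μ) :
    Integrable (uncurry fun x v => K x v * f (x - c v)) (μ.prod ν) := by
  have hshear := measurePreserving_sub_comp_prod (μ := μ) (ν := ν) hc
  have hbound : Integrable (fun p : G × V => ‖f (p.1 - c p.2)‖ * h p.2) (μ.prod ν) :=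
    hshear.integrable_comp_of_integrable (g := fun p : G × V => ‖f p.1‖ * h p.2)
      (hf.norm.mul_prod hh)
  refine hbound.mono' (hK.mul (hf.aestronglyMeasurable.comp_fst.comp_measurePreserving hshear))
    (ae_of_all _ fun ⟨x, v⟩ => ?_)
  rw [uncurry_apply_pair, Real.norm_eq_abs, abs_mul, mul_comm, ← Real.norm_eq_abs]
  exact mul_le_mul_of_nonneg_left (hKh x v) (norm_nonneg _)

theorem integral_integral_mul_comp_sub_eq_zero [AddGroup V] [MeasurableNeg V] [ν.IsNegInvariant]
    {K : G → V → ℝ} {f : G → ℝ} {h : V → ℝ}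
    (hc : Measurable c) (hK : AEStronglyMeasurable (uncurry K) (μ.prod ν))
    (hKh : ∀ x v, |K x v| ≤ h v) (hh : Integrable h ν) (hf : Integrable f μ)
    (hK_add : ∀ x v, K (x + c v) v = K x v) (hK_neg : ∀ x v, K x (-v) = -K x v) :
    ∫ x, ∫ v, K x v * f (x - c v) ∂ν ∂μ = 0 := by
  rw [integral_integral_swap (integrable_mul_comp_sub_prod hc hK hKh hh hf)]
  have hinner (v : V) : ∫ x, K x v * f (x - c v) ∂μ = ∫ x, K x v * f x ∂μ :=
    integral_mul_comp_sub_eq_of_add_eq (k := (K · v)) (hK_add · v)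
  simp_rw [hinner]
  refine integral_eq_zero_of_odd ν fun v => ?_
  simp_rw [hK_neg, neg_mul, integral_neg]

end Shear

namespace Matrix

variable {ι κ R : Type*} [Fintype ι] [Fintype κ]

theorem dotProduct_mulVec_self_eq_zero_of_transpose_eq_neg [CommRing R] [IsAddTorsionFree R]
    {Θ : Matrix ι ι R} (hΘ : Θᵀ = -Θ) (w : ι → R) :
    w ⬝ᵥ Θ *ᵥ w = 0 := by
  rw [← self_eq_neg]
  conv_lhs => rw [dotProduct_mulVec, ← mulVec_transpose, hΘ, neg_mulVec, neg_dotProduct,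
    dotProduct_comm]

theorem dotProduct_mulVec_add_mulVec_transpose [CommRing R] [IsAddTorsionFree R]
    {Θ : Matrix ι ι R} (hΘ : Θᵀ = -Θ) (Z : Matrix κ ι R) (x : ι → R) (v : κ → R) :
    v ⬝ᵥ Z *ᵥ (x + Θ *ᵥ Zᵀ *ᵥ v) = v ⬝ᵥ Z *ᵥ x := by
  rw [mulVec_add, dotProduct_add, dotProduct_mulVec v Z (Θ *ᵥ _), ← mulVec_transpose,
    dotProduct_mulVec_self_eq_zero_of_transpose_eq_neg hΘ, add_zero]

end Matrix

section Kernel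

variable {ι κ : Type*} [Fintype ι] [Fintype κ]

noncomputable def imPhaseKernel (H : (κ → ℝ) → ℂ) (Z : Matrix κ ι ℝ) (x : ι → ℝ) (v : κ → ℝ) :
    ℝ :=
  (H v * Complex.exp (Complex.I * ((v ⬝ᵥ Z *ᵥ x : ℝ) : ℂ))).im

variable {H : (κ → ℝ) → ℂ} {Z : Matrix κ ι ℝ}

theorem imPhaseKernel_add_mulVec {Θ : Matrix ι ι ℝ} (hΘ : Θᵀ = -Θ) (x : ι → ℝ) (v : κ → ℝ) :
    imPhaseKernel H Z (x + Θ *ᵥ Zᵀ *ᵥ v) v = imPhaseKernel H Z x v := by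
  rw [imPhaseKernel, dotProduct_mulVec_add_mulVec_transpose hΘ, imPhaseKernel]

theorem imPhaseKernel_neg (hH : ∀ v, H (-v) = starRingEnd ℂ (H v)) (x : ι → ℝ) (v : κ → ℝ) :
    imPhaseKernel H Z x (-v) = -imPhaseKernel H Z x v := by
  have hexp : Complex.exp (Complex.I * (((-v) ⬝ᵥ Z *ᵥ x : ℝ) : ℂ)) =
      starRingEnd ℂ (Complex.exp (Complex.I * ((v ⬝ᵥ Z *ᵥ x : ℝ) : ℂ))) := by
    rw [← Complex.exp_conj, map_mul, Complex.conj_I, Complex.conj_ofReal, neg_dotProduct,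
      Complex.ofReal_neg, neg_mul_comm]
  rw [imPhaseKernel, imPhaseKernel, hH, hexp, ← map_mul, Complex.conj_im]

theorem abs_imPhaseKernel_le (x : ι → ℝ) (v : κ → ℝ) : |imPhaseKernel H Z x v| ≤ ‖H v‖ := by
  refine (Complex.abs_im_le_norm _).trans_eq ?_
  rw [norm_mul, mul_comm Complex.I, Complex.norm_exp_ofReal_mul_I, mul_one]

theorem aestronglyMeasurable_imPhaseKernel {μ : Measure (ι → ℝ)} {ν : Measure (κ → ℝ)}
    [SFinite ν] (hH : AEStronglyMeasurable H ν) :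
    AEStronglyMeasurable (uncurry (imPhaseKernel H Z)) (μ.prod ν) := by
  have hphase : Continuous fun p : (ι → ℝ) × (κ → ℝ) =>
      Complex.exp (Complex.I * ((p.2 ⬝ᵥ Z *ᵥ p.1 : ℝ) : ℂ)) := by
    simp only [dotProduct, mulVec]
    fun_prop
  exact (hH.comp_snd.mul hphase.aestronglyMeasurable).im

end Kernel

/-- The integral operator term preserves total mass:
`∫∫ Π(x,v) μ̃(x − ΘZᵀv) dv dx = 0`. -/
theorem integral_term_mass_zero {n d : ℕ}
    (H0 : (Fin d → ℝ) → ℂ) (hH0 : ∀ v, H0 (-v) = starRingEnd ℂ (H0 v))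
    (hH0_int : Integrable H0)
    (Z : Matrix (Fin d) (Fin n) ℝ)
    (Θ : Matrix (Fin n) (Fin n) ℝ) (hΘ : Θᵀ = -Θ)
    (μt : (Fin n → ℝ) → ℝ) (hμt : Integrable μt)
    (Pker : (Fin n → ℝ) → (Fin d → ℝ) → ℝ)
    (hPker : ∀ x v, Pker x v =
      (H0 v * Complex.exp (Complex.I * ((v ⬝ᵥ Z *ᵥ x : ℝ) : ℂ))).im) :
    ∫ x, (∫ v, Pker x v * μt (x - Θ *ᵥ Zᵀ *ᵥ v)) = 0 := by
  obtain rfl : Pker = imPhaseKernel H0 Z := funext₂ hPker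
  have hshift : Continuous fun v : Fin d → ℝ => Θ *ᵥ Zᵀ *ᵥ v :=
    continuous_const.matrix_mulVec (continuous_const.matrix_mulVec continuous_id)
  exact integral_integral_mul_comp_sub_eq_zero hshift.measurable
    (aestronglyMeasurable_imPhaseKernel hH0_int.aestronglyMeasurable) abs_imPhaseKernel_le
    hH0_int.norm hμt (imPhaseKernel_add_mulVec hΘ) (imPhaseKernel_neg hH0)
end
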